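/- Let X be a symmetric random variable with Λ finite near 0 and unbounded above. If X has regular upper tails and x_n = inf{t > 0 : P(X > t) ≤ (2 log n)/n}, then x_n / Λ*⁻¹(log n) → 1 as n → ∞. -/

import Mathlib

open MeasureTheory ProbabilityTheory Real Filter

noncomputable section

-- Log-moment generating function `Λ`, valued in `EReal` (`⊤` when the exponential
-- moment is infinite).
open Classical in
def lmgf {Ω : Type*} [MeasurableSpace Ω] (μ : Measure Ω) (X : Ω → ℝ) (s : ℝ) : EReal :=
  if Integrable (fun ω => Real.exp (s * X ω)) μ
  then ((Real.log (∫ ω, Real.exp (s * X ω) ∂μ) : ℝ) : EReal)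
  else ⊤

/-- The Legendre transform `Λ*` of the log-moment generating function (rate function). -/
def rateFn {Ω : Type*} [MeasurableSpace Ω] (μ : Measure Ω) (X : Ω → ℝ) (t : ℝ) : EReal :=
  ⨆ s : ℝ, ((s * t : ℝ) : EReal) - lmgf μ X s

/-- The generalised inverse `Λ*⁻¹(t) = inf {s ≥ 0 : Λ*(s) ≥ t}`. -/
def rateFnInv {Ω : Type*} [MeasurableSpace Ω] (μ : Measure Ω) (X : Ω → ℝ) (t : ℝ) : ℝ :=
  sInf {s : ℝ | 0 ≤ s ∧ (t : EReal) ≤ rateFn μ X s}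

/-- `X` is symmetric: `-X` has the same distribution as `X`. -/
def SymmetricRV {Ω : Type*} [MeasurableSpace Ω] (μ : Measure Ω) (X : Ω → ℝ) : Prop :=
  Measure.map X μ = Measure.map (fun ω => -X ω) μ

/-- `Λ` is finite in a neighbourhood of `0`. -/
def FiniteLmgfNearZero {Ω : Type*} [MeasurableSpace Ω] (μ : Measure Ω) (X : Ω → ℝ) : Prop :=
  ∃ δ > (0:ℝ), ∀ s : ℝ, |s| < δ → lmgf μ X s ≠ ⊤

/-- `X` has regular upper tails: `P(X > t) = exp(-(1+o(1)) Λ*(t))` as `t → ∞`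
(vacuous at points where `Λ*(t) = ∞`). -/
def RegularUpperTails {Ω : Type*} [MeasurableSpace Ω] (μ : Measure Ω) (X : Ω → ℝ) : Prop :=
  ∀ ε > (0:ℝ), ∀ᶠ t in atTop, ∀ r : ℝ, rateFn μ X t = (r : EReal) →
    Real.exp (-(1+ε)*r) ≤ (μ {ω | t < X ω}).toReal ∧
    (μ {ω | t < X ω}).toReal ≤ Real.exp (-(1-ε)*r)

/-- A good random variable: symmetric, `Λ` finite near `0`, regular upper tails. -/
def Good {Ω : Type*} [MeasurableSpace Ω] (μ : Measure Ω) (X : Ω → ℝ) : Prop :=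
  SymmetricRV μ X ∧ FiniteLmgfNearZero μ X ∧ RegularUpperTails μ X

/-- The non-diagonal elements of `Sym2 (Fin n)`: the edges of the complete graph `K_n`. -/
abbrev EdgeT (n : ℕ) := {e : Sym2 (Fin n) // ¬ e.IsDiag}


/-- Total weight of a subgraph `G'` of `K_n` with edge weights `x`. -/
def graphWeight {n : ℕ} (x : EdgeT n → ℝ) (G' : SimpleGraph (Fin n)) : ℝ :=
  ∑ e : EdgeT n, Set.indicator {e' : EdgeT n | (e' : Sym2 (Fin n)) ∈ G'.edgeSet} x e

/-- Total weight of the edges of a walk `p` with edge weights `x`. -/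
def walkWeight {n : ℕ} (x : EdgeT n → ℝ) {u v : Fin n}
    (p : (⊤ : SimpleGraph (Fin n)).Walk u v) : ℝ :=
  ∑ e : EdgeT n, Set.indicator {e' : EdgeT n | (e' : Sym2 (Fin n)) ∈ p.edges} x e

end

/-! By symmetry `Λ ≥ 0`, so on `[0, ∞)` the rate function `Λ*` is nondecreasing, finite
(Chernoff: `Λ*(t) ≤ -log P(X > t)`) and star-shaped: `Λ*(l t) ≤ l Λ*(t)` for `0 ≤ l ≤ 1`.
Regular tails make `Λ*` unbounded, so `R_n = Λ*⁻¹(log n) → ∞`. Star-shapedness lets the defining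
property of `R_n`, used at `b R_n` with `b` close to `1`, control `Λ*(a R_n)` for `a` farther from
`1`; the regular tail estimate then puts `P(X > a R_n)` below `1/n` when `a > 1` and above
`2 log n / n` when `a < 1`, so `(1 - η) R_n ≤ x_n ≤ (1 + η) R_n` for all large `n`. -/

open scoped Topology

section

variable {Ω : Type*} [MeasurableSpace Ω] {μ : Measure Ω} {X : Ω → ℝ} {s t : ℝ}

section Lmgf

lemma lmgf_of_integrable (h : Integrable (fun ω => exp (s * X ω)) μ) :
    lmgf μ X s = (log (mgf X μ s) : EReal) := by
  rw [lmgf, if_pos h, mgf]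

variable (μ X s) in
lemma lmgf_eq_top_or_exists_coe :
    lmgf μ X s = ⊤ ∨ ∃ L : ℝ, lmgf μ X s = L := by
  unfold lmgf
  split_ifs
  exacts [Or.inr ⟨_, rfl⟩, Or.inl rfl]

lemma lmgf_zero [IsProbabilityMeasure μ] : lmgf μ X 0 = 0 := by
  rw [lmgf_of_integrable (by simp), mgf_zero, log_one, EReal.coe_zero]

lemma SymmetricRV.identDistrib (hsym : SymmetricRV μ X) (hX : Measurable X) :
    IdentDistrib X (-X) μ μ :=
  ⟨hX.aemeasurable, hX.neg.aemeasurable, hsym⟩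

/-- `E[exp(sX)] = E[cosh(sX)] ≥ 1` by symmetry. -/
lemma SymmetricRV.one_le_mgf [IsProbabilityMeasure μ] (hsym : SymmetricRV μ X)
    (hX : Measurable X) (h : Integrable (fun ω => exp (s * X ω)) μ) : 1 ≤ mgf X μ s := by
  have hid := hsym.identDistrib hX
  have hneg : mgf X μ (-s) = mgf X μ s := by
    rw [← mgf_neg, ← mgf_congr_identDistrib hid]
  have h' : Integrable (fun ω => exp (-s * X ω)) μ := by
    have := ((hid.comp (measurable_const_mul s).exp).integrable_iff).1 h
    simpa [Function.comp_def, mul_neg] using this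
  have hcosh : mgf X μ s = ∫ ω, cosh (s * X ω) ∂μ := by
    simp_rw [cosh_eq, integral_div, ← neg_mul]
    rw [integral_add h h', ← mgf, ← mgf, hneg]
    ring
  rw [hcosh]
  calc (1 : ℝ) = ∫ _ω, (1 : ℝ) ∂μ := by simp
    _ ≤ ∫ ω, cosh (s * X ω) ∂μ :=
      integral_mono (integrable_const 1) ((h.add h').div_const 2 |>.congr
        (ae_of_all _ fun ω => by simp [cosh_eq, neg_mul])) fun ω => one_le_cosh _

lemma SymmetricRV.lmgf_nonneg [IsProbabilityMeasure μ] (hsym : SymmetricRV μ X)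
    (hX : Measurable X) (s : ℝ) : 0 ≤ lmgf μ X s := by
  by_cases h : Integrable (fun ω => exp (s * X ω)) μ
  · rw [lmgf_of_integrable h]
    exact EReal.coe_nonneg.2 (log_nonneg (hsym.one_le_mgf hX h))
  · rw [lmgf, if_neg h]
    exact le_top

end Lmgf

section RateFn

lemma rateFn_nonneg [IsProbabilityMeasure μ] (t : ℝ) : 0 ≤ rateFn μ X t := by
  have h := le_iSup (fun s : ℝ => ((s * t : ℝ) : EReal) - lmgf μ X s) 0
  rwa [lmgf_zero, zero_mul, EReal.coe_zero, sub_zero] at h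

lemma SymmetricRV.mul_sub_lmgf_nonpos [IsProbabilityMeasure μ] (hsym : SymmetricRV μ X)
    (hX : Measurable X) (hs : s ≤ 0) (ht : 0 ≤ t) : ((s * t : ℝ) : EReal) - lmgf μ X s ≤ 0 :=
  (EReal.sub_le_sub (EReal.coe_le_coe_iff.2 (mul_nonpos_of_nonpos_of_nonneg hs ht))
    (hsym.lmgf_nonneg hX s)).trans_eq (sub_zero _)

lemma mul_sub_lmgf_le_neg_log_tail [IsFiniteMeasure μ] (hs : 0 ≤ s)
    (hP : 0 < μ.real {ω | t < X ω}) :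
    ((s * t : ℝ) : EReal) - lmgf μ X s ≤ (-log (μ.real {ω | t < X ω}) : ℝ) := by
  by_cases h : Integrable (fun ω => exp (s * X ω)) μ
  · have hchernoff : μ.real {ω | t < X ω} ≤ exp (-s * t) * mgf X μ s :=
      (measureReal_mono fun ω (hω : t < X ω) => hω.le).trans
        (measure_ge_le_exp_mul_mgf t hs h)
    have hmgf : 0 < mgf X μ s := pos_of_mul_pos_right (hP.trans_le hchernoff) (exp_pos _).le
    rw [lmgf_of_integrable h, ← EReal.coe_sub, EReal.coe_le_coe_iff]
    have := log_le_log hP hchernoff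
    rw [log_mul (exp_pos _).ne' hmgf.ne', log_exp] at this
    linarith
  · rw [lmgf, if_neg h, EReal.sub_top]
    exact bot_le

lemma SymmetricRV.rateFn_le_neg_log_tail [IsProbabilityMeasure μ] (hsym : SymmetricRV μ X)
    (hX : Measurable X) (ht : 0 ≤ t) (hP : 0 < μ.real {ω | t < X ω}) :
    rateFn μ X t ≤ (-log (μ.real {ω | t < X ω}) : ℝ) := by
  refine iSup_le fun s => ?_
  rcases le_total s 0 with hs | hs
  · refine (hsym.mul_sub_lmgf_nonpos hX hs ht).trans (EReal.coe_nonneg.2 ?_)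
    exact neg_nonneg.2 (log_nonpos hP.le measureReal_le_one)
  · exact mul_sub_lmgf_le_neg_log_tail hs hP

lemma SymmetricRV.rateFn_monotoneOn [IsProbabilityMeasure μ] (hsym : SymmetricRV μ X)
    (hX : Measurable X) : MonotoneOn (rateFn μ X) (Set.Ici 0) := by
  intro t₁ ht₁ t₂ _ h
  refine iSup_le fun s => ?_
  rcases le_total s 0 with hs | hs
  · exact (hsym.mul_sub_lmgf_nonpos hX hs ht₁).trans (rateFn_nonneg t₂)
  · refine le_trans ?_ (le_iSup (fun s : ℝ => ((s * t₂ : ℝ) : EReal) - lmgf μ X s) s)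
    exact EReal.sub_le_sub (EReal.coe_le_coe_iff.2 (mul_le_mul_of_nonneg_left h hs)) le_rfl

/-- Since `Λ ≥ 0`, every term satisfies `s (l t) - Λ(s) ≤ l (s t - Λ(s))`. -/
lemma SymmetricRV.rateFn_mul_le [IsProbabilityMeasure μ] (hsym : SymmetricRV μ X)
    (hX : Measurable X) {l r : ℝ} (hl₀ : 0 ≤ l) (hl₁ : l ≤ 1) (hr : rateFn μ X t = r) :
    rateFn μ X (l * t) ≤ (l * r : ℝ) := by
  refine iSup_le fun s => ?_
  rcases lmgf_eq_top_or_exists_coe μ X s with hL | ⟨L, hL⟩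
  · rw [hL, EReal.sub_top]
    exact bot_le
  · have hL₀ : 0 ≤ L := EReal.coe_nonneg.1 (hL ▸ hsym.lmgf_nonneg hX s)
    have hst : s * t - L ≤ r := by
      rw [← EReal.coe_le_coe_iff, EReal.coe_sub, ← hL, ← hr]
      exact le_iSup (fun s : ℝ => ((s * t : ℝ) : EReal) - lmgf μ X s) s
    rw [hL, ← EReal.coe_sub, EReal.coe_le_coe_iff]
    nlinarith

lemma SymmetricRV.exists_rateFn_eq_coe [IsProbabilityMeasure μ] (hsym : SymmetricRV μ X)
    (hX : Measurable X) (hunb : ∀ t : ℝ, μ {ω | t < X ω} ≠ 0) (ht : 0 ≤ t) :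
    ∃ r : ℝ, rateFn μ X t = r := by
  have hP : 0 < μ.real {ω | t < X ω} := ENNReal.toReal_pos (hunb t) (measure_ne_top μ _)
  have hle := hsym.rateFn_le_neg_log_tail hX ht hP
  exact ⟨_, (EReal.coe_toReal (hle.trans_lt (EReal.coe_lt_top _)).ne
    ((EReal.bot_lt_zero.trans_le (rateFn_nonneg t)).ne')).symm⟩

end RateFn

lemma tendsto_measureReal_tail_atTop [IsFiniteMeasure μ] (hX : Measurable X) :
    Tendsto (fun t : ℝ => μ.real {ω | t < X ω}) atTop (𝓝 0) := by
  have hanti : Antitone fun t : ℝ => {ω | t < X ω} :=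
    fun t₁ t₂ h ω (hω : t₂ < X ω) => h.trans_lt hω
  have hempty : ⋂ t : ℝ, {ω | t < X ω} = ∅ :=
    Set.eq_empty_of_forall_notMem fun ω hω => lt_irrefl (X ω) (Set.mem_iInter.1 hω (X ω))
  have := tendsto_measure_iInter_atTop
    (fun t => (measurableSet_lt measurable_const hX).nullMeasurableSet) hanti
    ⟨0, measure_ne_top μ _⟩
  rw [hempty, measure_empty] at this
  exact (ENNReal.tendsto_toReal ENNReal.zero_ne_top).comp this

/-- Regular tails force `Λ*` to be unbounded, as `exp(-2Λ*(t)) ≤ P(X > t) → 0`. -/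
lemma RegularUpperTails.exists_le_rateFn [IsProbabilityMeasure μ] (hreg : RegularUpperTails μ X)
    (hsym : SymmetricRV μ X) (hX : Measurable X) (hunb : ∀ t : ℝ, μ {ω | t < X ω} ≠ 0)
    (y : ℝ) : ∃ s, 0 ≤ s ∧ (y : EReal) ≤ rateFn μ X s := by
  obtain ⟨t, hlower, hsmall, ht⟩ := ((hreg 1 one_pos).and <|
    ((tendsto_measureReal_tail_atTop (μ := μ) hX).eventually
      (gt_mem_nhds (exp_pos (-2 * y)))).and (eventually_ge_atTop 0)).exists
  obtain ⟨r, hr⟩ := hsym.exists_rateFn_eq_coe hX hunb ht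
  have hexp : exp (-(1 + 1) * r) < exp (-2 * y) := (hlower r hr).1.trans_lt hsmall
  refine ⟨t, ht, hr ▸ EReal.coe_le_coe_iff.2 ?_⟩
  linarith [exp_lt_exp.1 hexp]

section RateFnInv

variable {y : ℝ}

lemma le_rateFn_of_rateFnInv_lt (hmono : MonotoneOn (rateFn μ X) (Set.Ici 0))
    (hne : {s | 0 ≤ s ∧ (y : EReal) ≤ rateFn μ X s}.Nonempty) (h : rateFnInv μ X y < s) :
    (y : EReal) ≤ rateFn μ X s := by
  obtain ⟨s', ⟨hs'₀, hs'⟩, hs's⟩ := exists_lt_of_csInf_lt hne h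
  exact hs'.trans (hmono hs'₀ (hs'₀.trans hs's.le) hs's.le)

lemma rateFn_lt_of_lt_rateFnInv (hs : 0 ≤ s) (h : s < rateFnInv μ X y) :
    rateFn μ X s < y :=
  not_le.1 fun hy => (csInf_le (⟨0, fun _ hs => hs.1⟩ : BddBelow {s | 0 ≤ s ∧
    (y : EReal) ≤ rateFn μ X s}) ⟨hs, hy⟩).not_gt h

lemma tendsto_rateFnInv_atTop (hmono : MonotoneOn (rateFn μ X) (Set.Ici 0))
    (hne : ∀ y : ℝ, {s | 0 ≤ s ∧ (y : EReal) ≤ rateFn μ X s}.Nonempty)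
    (hfin : ∀ t, 0 ≤ t → ∃ r : ℝ, rateFn μ X t = r) :
    Tendsto (rateFnInv μ X) atTop atTop := by
  refine tendsto_atTop.2 fun M => ?_
  obtain ⟨r, hr⟩ := hfin (max M 0) (le_max_right M 0)
  filter_upwards [eventually_gt_atTop r] with y hy
  refine (le_max_left M 0).trans (not_lt.1 fun hlt => ?_)
  have := le_rateFn_of_rateFnInv_lt hmono (hne y) hlt
  rw [hr, EReal.coe_le_coe_iff] at this
  linarith

end RateFnInv

section TailQuantile

variable {c : ℝ}

noncomputable def tailQuantile (μ : Measure Ω) (X : Ω → ℝ) (c : ℝ) : ℝ :=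
  sInf {t : ℝ | 0 < t ∧ μ.real {ω | t < X ω} ≤ c}

lemma tailQuantile_le (ht : 0 < t) (hP : μ.real {ω | t < X ω} ≤ c) : tailQuantile μ X c ≤ t :=
  csInf_le ⟨0, fun _ hu => hu.1.le⟩ ⟨ht, hP⟩

lemma le_tailQuantile [IsFiniteMeasure μ] (hX : Measurable X) (hc : 0 < c)
    (hP : c < μ.real {ω | t < X ω}) : t ≤ tailQuantile μ X c := by
  obtain ⟨u, hu, hu₀⟩ := (((tendsto_measureReal_tail_atTop (μ := μ) hX).eventually
    (gt_mem_nhds hc)).and (eventually_gt_atTop 0)).exists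
  refine le_csInf ⟨u, hu₀, hu.le⟩ fun u ⟨_, hu⟩ => not_lt.1 fun hut => ?_
  have : μ.real {ω | t < X ω} ≤ μ.real {ω | u < X ω} :=
    measureReal_mono fun ω (hω : t < X ω) => hut.trans hω
  linarith

end TailQuantile

lemma RegularUpperTails.tendsto_rateFnInv_atTop [IsProbabilityMeasure μ]
    (hreg : RegularUpperTails μ X) (hsym : SymmetricRV μ X) (hX : Measurable X)
    (hunb : ∀ t : ℝ, μ {ω | t < X ω} ≠ 0) : Tendsto (rateFnInv μ X) atTop atTop :=
  _root_.tendsto_rateFnInv_atTop (hsym.rateFn_monotoneOn hX)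
    (hreg.exists_le_rateFn hsym hX hunb) fun _ ht => hsym.exists_rateFn_eq_coe hX hunb ht

lemma tendsto_log_natCast_atTop : Tendsto (fun n : ℕ => log n) atTop atTop :=
  tendsto_log_atTop.comp tendsto_natCast_atTop_atTop

lemma eventually_two_mul_log_div_lt_exp {θ : ℝ} (hθ : θ < 1) :
    ∀ᶠ n : ℕ in atTop, 2 * log n / n < exp (-θ * log n) := by
  have hlin : ∀ᶠ x : ℝ in atTop, 2 * x < exp ((1 - θ) * x) := by
    filter_upwards [(isLittleO_pow_exp_pos_mul_atTop 1 (sub_pos.2 hθ)).def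
      (by norm_num : (0 : ℝ) < 1 / 3), eventually_gt_atTop 0] with x hx hx₀
    rw [pow_one, norm_of_nonneg hx₀.le, norm_of_nonneg (exp_pos _).le] at hx
    linarith [exp_pos ((1 - θ) * x)]
  filter_upwards [tendsto_log_natCast_atTop.eventually hlin, eventually_gt_atTop 0] with n hn hn₀
  have hn₀ : (0 : ℝ) < n := Nat.cast_pos.2 hn₀
  rw [div_lt_iff₀ hn₀]
  calc 2 * log n < exp ((1 - θ) * log n) := hn
    _ = exp (-θ * log n) * exp (log n) := by rw [← exp_add]; ring_nf
    _ = exp (-θ * log n) * n := by rw [exp_log hn₀]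

/-- With `R = Λ*⁻¹(log n)` and `1 < b < a`: `(b/a) Λ*(aR) ≥ Λ*(bR) ≥ log n`, so the upper tail
bound with `1 - ε = b/a` gives `P(X > aR) ≤ 1/n`. -/
lemma RegularUpperTails.eventually_tailQuantile_le [IsProbabilityMeasure μ]
    (hreg : RegularUpperTails μ X) (hsym : SymmetricRV μ X) (hX : Measurable X)
    (hunb : ∀ t : ℝ, μ {ω | t < X ω} ≠ 0) {a : ℝ} (ha : 1 < a) :
    ∀ᶠ n : ℕ in atTop, tailQuantile μ X (2 * log n / n) ≤ a * rateFnInv μ X (log n) := by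
  obtain ⟨b, hb, hba⟩ := exists_between ha
  have ha₀ : 0 < a := zero_lt_one.trans ha
  have hR : Tendsto (fun n : ℕ => rateFnInv μ X (log n)) atTop atTop :=
    (hreg.tendsto_rateFnInv_atTop hsym hX hunb).comp tendsto_log_natCast_atTop
  have hε : 0 < 1 - b / a := sub_pos.2 ((div_lt_one ha₀).2 hba)
  filter_upwards [(hR.const_mul_atTop ha₀).eventually (hreg _ hε),
    hR.eventually_gt_atTop 0, tendsto_log_natCast_atTop.eventually_ge_atTop 1,
    eventually_gt_atTop 0] with n htail hR₀ hlog₁ hn₀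
  set R := rateFnInv μ X (log n)
  obtain ⟨r, hr⟩ := hsym.exists_rateFn_eq_coe hX hunb (t := a * R) (by positivity)
  have hlog_le : (log n : EReal) ≤ rateFn μ X (b * R) :=
    le_rateFn_of_rateFnInv_lt (hsym.rateFn_monotoneOn hX)
      (hreg.exists_le_rateFn hsym hX hunb _) (by nlinarith)
  have hstar := hsym.rateFn_mul_le hX (by positivity) ((div_le_one ha₀).2 hba.le) hr
  rw [show b / a * (a * R) = b * R by field_simp] at hstar
  have hlog : log n ≤ b / a * r := EReal.coe_le_coe_iff.1 (hlog_le.trans hstar)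
  have hn₀ : (0 : ℝ) < n := Nat.cast_pos.2 hn₀
  refine tailQuantile_le (by positivity) ?_
  calc μ.real {ω | a * R < X ω} ≤ exp (-(1 - (1 - b / a)) * r) := (htail r hr).2
    _ ≤ exp (-log n) := exp_le_exp.2 (by linarith)
    _ = 1 / n := by rw [exp_neg, exp_log hn₀, one_div]
    _ ≤ 2 * log n / n := by gcongr; linarith

/-- With `R = Λ*⁻¹(log n)` and `a < b < 1`: `Λ*(aR) ≤ (a/b) Λ*(bR) < (a/b) log n`, so the lower
tail bound with `1 + ε = c < b/a` gives `P(X > aR) ≥ n^(-c a/b) > 2 log n / n`. -/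
lemma RegularUpperTails.eventually_le_tailQuantile [IsProbabilityMeasure μ]
    (hreg : RegularUpperTails μ X) (hsym : SymmetricRV μ X) (hX : Measurable X)
    (hunb : ∀ t : ℝ, μ {ω | t < X ω} ≠ 0) {a : ℝ} (ha₀ : 0 < a) (ha₁ : a < 1) :
    ∀ᶠ n : ℕ in atTop, a * rateFnInv μ X (log n) ≤ tailQuantile μ X (2 * log n / n) := by
  obtain ⟨b, hab, hb⟩ := exists_between ha₁
  have hb₀ : 0 < b := ha₀.trans hab
  obtain ⟨c, hc₁, hcb⟩ := exists_between ((one_lt_div ha₀).2 hab)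
  have hθ : c * (a / b) < 1 := by
    rw [← mul_div_assoc, div_lt_one hb₀]
    exact (lt_div_iff₀ ha₀).1 hcb
  have hR : Tendsto (fun n : ℕ => rateFnInv μ X (log n)) atTop atTop :=
    (hreg.tendsto_rateFnInv_atTop hsym hX hunb).comp tendsto_log_natCast_atTop
  filter_upwards [(hR.const_mul_atTop ha₀).eventually (hreg (c - 1) (sub_pos.2 hc₁)),
    hR.eventually_gt_atTop 0, tendsto_log_natCast_atTop.eventually_gt_atTop 0,
    eventually_gt_atTop 0, eventually_two_mul_log_div_lt_exp hθ]
    with n htail hR₀ hlog₀ hn₀ hpow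
  set R := rateFnInv μ X (log n)
  obtain ⟨r, hr⟩ := hsym.exists_rateFn_eq_coe hX hunb (t := a * R) (by positivity)
  obtain ⟨r', hr'⟩ := hsym.exists_rateFn_eq_coe hX hunb (t := b * R) (by positivity)
  have hr'_lt : r' < log n := by
    rw [← EReal.coe_lt_coe_iff, ← hr']
    exact rateFn_lt_of_lt_rateFnInv (by positivity) (by nlinarith)
  have hstar := hsym.rateFn_mul_le hX (by positivity) ((div_le_one hb₀).2 hab.le) hr'
  rw [show a / b * (b * R) = a * R by field_simp, hr, EReal.coe_le_coe_iff] at hstar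
  have hr_le : r ≤ a / b * log n := hstar.trans (by gcongr)
  refine le_tailQuantile hX (div_pos (by linarith) (Nat.cast_pos.2 hn₀)) ?_
  calc 2 * log n / n < exp (-(c * (a / b)) * log n) := hpow
    _ ≤ exp (-(1 + (c - 1)) * r) :=
      exp_le_exp.2 (by nlinarith [mul_le_mul_of_nonneg_left hr_le (by linarith : (0 : ℝ) ≤ c)])
    _ ≤ μ.real {ω | a * R < X ω} := (htail r hr).1

end

theorem quantile_ratio_tendsto_one_general {Ω : Type*} [MeasurableSpace Ω] (μ : Measure Ω)
    [IsProbabilityMeasure μ] (X : Ω → ℝ) (hX : Measurable X)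
    (hsym : SymmetricRV μ X)
    (hunb : ∀ t : ℝ, μ {ω | t < X ω} ≠ 0)
    (hreg : RegularUpperTails μ X) :
    Tendsto (fun n : ℕ =>
        sInf {t : ℝ | 0 < t ∧ (μ {ω | t < X ω}).toReal ≤ 2 * Real.log n / n} /
          rateFnInv μ X (Real.log n)) atTop (nhds 1) := by
  change Tendsto (fun n : ℕ => tailQuantile μ X (2 * log n / n) / rateFnInv μ X (log n))
    atTop (𝓝 1)
  have hR₀ : ∀ᶠ n : ℕ in atTop, 0 < rateFnInv μ X (log n) :=
    ((hreg.tendsto_rateFnInv_atTop hsym hX hunb).comp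
      tendsto_log_natCast_atTop).eventually_gt_atTop 0
  refine tendsto_order.2 ⟨fun a' ha' => ?_, fun a' ha' => ?_⟩
  · obtain ⟨a, ha, ha₁⟩ := exists_between (max_lt ha' one_pos)
    filter_upwards [hreg.eventually_le_tailQuantile hsym hX hunb
      ((le_max_right _ _).trans_lt ha) ha₁, hR₀] with n hn hn₀
    exact ((le_max_left _ _).trans_lt ha).trans_le ((le_div_iff₀ hn₀).2 hn)
  · obtain ⟨a, ha₁, ha⟩ := exists_between ha'
    filter_upwards [hreg.eventually_tailQuantile_le hsym hX hunb ha₁, hR₀] with n hn hn₀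
    exact ((div_le_iff₀ hn₀).2 hn).trans_lt ha

/-- for a symmetric random variable with `Λ` finite near `0`, unbounded above,
with regular upper tails, the quantile `x_n = inf {t > 0 : P(X > t) ≤ (2 log n)/n}`
satisfies `x_n / Λ*⁻¹(log n) → 1`. -/
theorem quantile_ratio_tendsto_one {Ω : Type*} [MeasurableSpace Ω] (μ : Measure Ω)
    [IsProbabilityMeasure μ] (X : Ω → ℝ) (hX : Measurable X)
    (hsym : SymmetricRV μ X) (hfin : FiniteLmgfNearZero μ X)
    (hunb : ∀ t : ℝ, μ {ω | t < X ω} ≠ 0)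
    (hreg : RegularUpperTails μ X) :
    Tendsto (fun n : ℕ =>
        sInf {t : ℝ | 0 < t ∧ (μ {ω | t < X ω}).toReal ≤ 2 * Real.log n / n} /
          rateFnInv μ X (Real.log n)) atTop (nhds 1) :=
  quantile_ratio_tendsto_one_general μ X hX hsym hunb hreg
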